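/- arXiv:2001.01812 — 6 statements merged into one kernel-verified Lean document; each statement's English description precedes it below -/
import Mathlib

section
/- Let n ≥ 2k, and suppose F* ⊆ F ⊆ binom([n],k) are such that whenever A, B ∈ F satisfy A ∩ B = ∅, both A and B lie in F*. Then |F| ≤ C(n-1, k-1) + ((n-k)/n)·|F*|. -/
/-! Katona's cycle method. Arrange the ground set on a cycle of length `n`. If some arc of `F`
(an interval of `k` consecutive points) is not in `F*`, every other arc of `F` meets it, so all
arcs of `F` lie among the `2k - 1` arcs around it, which split into the arc itself and `k - 1`
pairs of disjoint arcs. Weighting arcs of `F \ F*` by `n` and arcs of `F*` by `k`, each pair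
carries weight at most `n` (a disjoint pair in `F` lies in `F*`, and `2k ≤ n`), so the arcs of
`F` weigh at most `n k`. Averaged over all arrangements every `k`-set is an arc equally often,
which turns this into `n |F \ F*| + k |F*| ≤ k C(n, k) = n C(n-1, k-1)`. -/

open Finset

section CyclicInterval

variable {n : ℕ}

def cyclicInterval (i : ZMod n) (k : ℕ) : Finset (ZMod n) :=
  (range k).image fun t : ℕ => i + t

lemma card_cyclicInterval (i : ZMod n) {k : ℕ} (hk : k ≤ n) : #(cyclicInterval i k) = k := by
  rw [cyclicInterval, card_image_of_injOn, card_range]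
  intro s hs t ht hst
  have h := congrArg ZMod.val (add_left_cancel hst)
  rwa [ZMod.val_natCast_of_lt ((mem_range.mp hs).trans_le hk),
    ZMod.val_natCast_of_lt ((mem_range.mp ht).trans_le hk)] at h

variable [NeZero n]

lemma mem_cyclicInterval {i j : ZMod n} {k : ℕ} :
    j ∈ cyclicInterval i k ↔ (j - i).val < k := by
  constructor
  · simp only [cyclicInterval, mem_image, mem_range]
    rintro ⟨t, ht, rfl⟩
    rw [add_sub_cancel_left, ZMod.val_natCast]
    exact (Nat.mod_le t n).trans_lt ht
  · intro h
    exact mem_image.mpr ⟨(j - i).val, mem_range.mpr h, by simp⟩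

lemma disjoint_cyclicInterval {i j : ZMod n} {k : ℕ} (h₁ : k ≤ (j - i).val)
    (h₂ : (j - i).val ≤ n - k) : Disjoint (cyclicInterval i k) (cyclicInterval j k) := by
  refine disjoint_left.mpr fun x hi hj => ?_
  rw [mem_cyclicInterval] at hi hj
  have h := ZMod.val_add (x - j) (j - i)
  rw [sub_add_sub_cancel, Nat.mod_eq_of_lt (by omega)] at h
  omega

-- `D` and `P` stand for the starting points of the arcs in `F` and in `F*` on a fixed cycle.
lemma mul_card_sdiff_add_mul_card_le_of_cyclicInterval {k : ℕ} (hkn : 2 * k ≤ n)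
    {D P : Finset (ZMod n)} (hPD : P ⊆ D) (hD : ∀ i ∈ D, ∀ j ∈ D,
      Disjoint (cyclicInterval i k) (cyclicInterval j k) → i ∈ P ∧ j ∈ P) :
    n * #(D \ P) + k * #P ≤ n * k := by
  obtain hDP | ⟨q, hq⟩ := (D \ P).eq_empty_or_nonempty
  · have hP : #P ≤ n := by simpa using card_le_univ P
    rw [hDP, card_empty, mul_zero, zero_add, mul_comm n]
    exact Nat.mul_le_mul_left k hP
  obtain ⟨hqD, hqP⟩ := mem_sdiff.mp hq
  have hkn' : k < n := by have := NeZero.pos n; omega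
  -- Every arc of `D` meets the arc at `q ∉ P`, so `D` lies in the `2k` points around `q`.
  have hcover : D ⊆ cyclicInterval (q - (k : ZMod n)) k ∪ cyclicInterval q k := by
    intro j hj
    by_contra hj'
    simp only [mem_union, mem_cyclicInterval, not_or, not_lt] at hj'
    have h := ZMod.val_add (j - q) (k : ZMod n)
    rw [sub_add, ZMod.val_natCast_of_lt hkn'] at h
    have hfar : (j - q).val ≤ n - k := by
      by_contra! hlt
      have := ZMod.val_lt (j - q)
      rw [Nat.mod_eq_sub_mod (by omega), Nat.mod_eq_of_lt (by omega)] at h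
      omega
    exact hqP (hD q hqD j hj (disjoint_cyclicInterval hj'.2 hfar)).1
  let w : ZMod n → ℕ := fun x => if x ∈ P then k else if x ∈ D then n else 0
  have hw : ∑ x ∈ D, w x = n * #(D \ P) + k * #P := by
    rw [← sum_sdiff hPD, sum_congr rfl fun x hx => if_neg (mem_sdiff.mp hx).2,
      sum_congr rfl fun x hx => if_pos hx]
    simp only [sum_ite_mem, sum_const, smul_eq_mul, inter_eq_left.mpr sdiff_subset, mul_comm]
  have hpair : ∀ a : ZMod n, w a + w (a + k) ≤ n := by
    intro a
    have hdist : (a + k - a).val = k := by rw [add_sub_cancel_left, ZMod.val_natCast_of_lt hkn']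
    have hboth := fun ha hb => hD a ha (a + k) hb (disjoint_cyclicInterval hdist.ge (by omega))
    have hle : ∀ x, w x ≤ n := fun x => by dsimp only [w]; split_ifs <;> omega
    by_cases ha : a ∈ D
    · by_cases hb : a + k ∈ D
      · obtain ⟨haP, hbP⟩ := hboth ha hb
        simp only [w, if_pos haP, if_pos hbP]
        omega
      · simpa [w, hb, mt (@hPD _) hb] using hle a
    · simpa [w, ha, mt (@hPD _) ha] using hle (a + k)
  calc n * #(D \ P) + k * #P = ∑ x ∈ D, w x := hw.symm
    _ ≤ ∑ x ∈ cyclicInterval (q - (k : ZMod n)) k ∪ cyclicInterval q k, w x :=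
      sum_le_sum_of_subset hcover
    _ ≤ ∑ x ∈ cyclicInterval (q - (k : ZMod n)) k, w x
          + ∑ x ∈ cyclicInterval q k, w x := by
      rw [← sum_union_inter]
      exact le_self_add
    _ ≤ ∑ t ∈ range k, w (q - (k : ZMod n) + t) + ∑ t ∈ range k, w (q + t) :=
      add_le_add (sum_image_le_of_nonneg fun _ _ => Nat.zero_le _)
        (sum_image_le_of_nonneg fun _ _ => Nat.zero_le _)
    _ = ∑ t ∈ range k, (w (q - (k : ZMod n) + t) + w (q - k + t + k)) := by
      rw [← sum_add_distrib]
      congr! 3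
      ring
    _ ≤ ∑ _t ∈ range k, n := sum_le_sum fun t _ => hpair _
    _ = n * k := by rw [sum_const, card_range, smul_eq_mul, mul_comm]

end CyclicInterval

section Arrangements

variable {β α : Type*} [Fintype β] [Fintype α] [DecidableEq β] [DecidableEq α]

lemma card_filter_equiv_image_eq_congr (s : Finset β) {t t' : Finset α} (h : #t = #t') :
    #{f : β ≃ α | s.image f = t} = #{f : β ≃ α | s.image f = t'} := by
  let e : t ≃ t' := equivOfCardEq h
  let τ : Equiv.Perm α := e.extendSubtype
  have hτ : t.image τ = t' := eq_of_subset_of_card_le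
    (fun x hx => by
      obtain ⟨y, hy, rfl⟩ := mem_image.mp hx
      exact e.extendSubtype_mem y hy)
    (by rw [card_image_of_injective _ τ.injective, h])
  refine card_equiv ((Equiv.refl β).equivCongr τ) fun f => ?_
  simp only [mem_filter, mem_univ, true_and]
  rw [← hτ, ← (image_injective τ.injective).eq_iff, image_image]
  exact Iff.rfl

lemma card_filter_equiv_image_mem_mul_choose (s : Finset β) {G : Finset (Finset α)}
    (hG : ∀ A ∈ G, #A = #s) :
    #{f : β ≃ α | s.image f ∈ G} * (Fintype.card α).choose #s
      = #G * Fintype.card (β ≃ α) := by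
  have hfiber (A : Finset α) (hA : #A = #s) :
      #{f : β ≃ α | s.image f = A} * (Fintype.card α).choose #s
        = Fintype.card (β ≃ α) := by
    have hmaps : Set.MapsTo (fun f : β ≃ α => s.image f) (univ : Finset (β ≃ α))
        (powersetCard #s univ : Finset (Finset α)) := fun f _ => by
      simp [card_image_of_injective _ f.injective]
    rw [← card_univ (α := β ≃ α), card_eq_sum_card_fiberwise hmaps, sum_congr rfl fun B hB =>
      card_filter_equiv_image_eq_congr s ((mem_powersetCard.mp hB).2.trans hA.symm),
      sum_const, card_powersetCard, card_univ, smul_eq_mul, mul_comm]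
  have hmaps : Set.MapsTo (fun f : β ≃ α => s.image f)
      ({f | s.image f ∈ G} : Finset (β ≃ α)) G :=
    fun f hf => (mem_filter.mp hf).2
  rw [card_eq_sum_card_fiberwise hmaps, sum_mul, sum_congr rfl fun A hA => ?_, sum_const,
    smul_eq_mul]
  rw [filter_filter, ← hfiber A (hG A hA)]
  congr 3
  ext f
  constructor
  · exact fun h => h.2
  · rintro rfl
    exact ⟨hA, rfl⟩

lemma sum_card_filter_cyclicInterval_mem_mul_choose {n k : ℕ} [NeZero n] (hkn : k ≤ n)
    {G : Finset (Finset α)} (hG : ∀ A ∈ G, #A = k) :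
    (∑ f : ZMod n ≃ α, #{i | (cyclicInterval i k).image f ∈ G}) * (Fintype.card α).choose k
      = n * #G * Fintype.card (ZMod n ≃ α) := by
  have hswap : ∑ f : ZMod n ≃ α, #{i | (cyclicInterval i k).image f ∈ G}
      = ∑ i : ZMod n, #{f : ZMod n ≃ α | (cyclicInterval i k).image f ∈ G} := by
    simp only [card_filter]
    exact sum_comm
  rw [hswap, sum_mul, sum_congr rfl fun i _ => ?_, sum_const, card_univ, ZMod.card, smul_eq_mul,
    mul_assoc]
  have := card_filter_equiv_image_mem_mul_choose (cyclicInterval i k)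
    (fun A hA => (hG A hA).trans (card_cyclicInterval i hkn).symm)
  rwa [card_cyclicInterval i hkn] at this

theorem mul_card_sdiff_add_mul_card_le_mul_choose {n k : ℕ} [NeZero n] (hα : Fintype.card α = n)
    (hkn : 2 * k ≤ n) {F Fs : Finset (Finset α)} (hsub : Fs ⊆ F) (hF : ∀ A ∈ F, #A = k)
    (hd : ∀ A ∈ F, ∀ B ∈ F, Disjoint A B → A ∈ Fs ∧ B ∈ Fs) :
    n * #(F \ Fs) + k * #Fs ≤ k * n.choose k := by
  have hper (f : ZMod n ≃ α) : n * #{i | (cyclicInterval i k).image f ∈ F \ Fs}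
      + k * #{i | (cyclicInterval i k).image f ∈ Fs} ≤ n * k := by
    have := mul_card_sdiff_add_mul_card_le_of_cyclicInterval hkn
      (D := {i | (cyclicInterval i k).image f ∈ F})
      (P := {i | (cyclicInterval i k).image f ∈ Fs})
      (monotone_filter_right _ fun _ _ => (hsub ·))
      fun i hi j hj hij => by
        simpa using hd _ (mem_filter.mp hi).2 _ (mem_filter.mp hj).2
          ((disjoint_image f.injective).mpr hij)
    convert this using 4
    ext i
    simp
  have hsum := sum_le_sum fun f (_ : f ∈ univ) => hper f
  rw [sum_add_distrib, ← mul_sum, ← mul_sum, sum_const, card_univ, smul_eq_mul] at hsum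
  have hN : 0 < n * Fintype.card (ZMod n ≃ α) :=
    Nat.mul_pos (NeZero.pos n) (Fintype.card_pos_iff.mpr
      ⟨Fintype.equivOfCardEq (by rw [ZMod.card, hα])⟩)
  have hkn' : k ≤ n := by omega
  have hFs := sum_card_filter_cyclicInterval_mem_mul_choose hkn' fun A hA => hF A (hsub hA)
  have hFFs := sum_card_filter_cyclicInterval_mem_mul_choose hkn' (G := F \ Fs)
    fun A hA => hF A (mem_sdiff.mp hA).1
  rw [hα] at hFs hFFs
  refine Nat.le_of_mul_le_mul_right ?_ hN
  calc (n * #(F \ Fs) + k * #Fs) * (n * Fintype.card (ZMod n ≃ α))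
      = (n * ∑ f : ZMod n ≃ α, #{i | (cyclicInterval i k).image f ∈ F \ Fs}
          + k * ∑ f : ZMod n ≃ α, #{i | (cyclicInterval i k).image f ∈ Fs})
        * n.choose k := by
        rw [eq_comm, add_mul, mul_assoc n, mul_assoc k, hFs, hFFs]
        ring
    _ ≤ Fintype.card (ZMod n ≃ α) * (n * k) * n.choose k := Nat.mul_le_mul_right _ hsum
    _ = k * n.choose k * (n * Fintype.card (ZMod n ≃ α)) := by ring

end Arrangements

theorem stmt_1 (n k : ℕ) (hnk : 2 * k ≤ n)
    (F Fs : Finset (Finset (Fin n))) (hsub : Fs ⊆ F)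
    (hF : ∀ A ∈ F, A.card = k)
    (hd : ∀ A ∈ F, ∀ B ∈ F, A ∩ B = ∅ → A ∈ Fs ∧ B ∈ Fs) :
    (F.card : ℚ) ≤ (n - 1).choose (k - 1) + ((n : ℚ) - k) / n * Fs.card := by
  rcases Nat.eq_zero_or_pos n with rfl | hn
  · obtain rfl : k = 0 := by omega
    have hF1 : #F ≤ 1 := (card_le_univ F).trans (by simp)
    simpa using (Nat.cast_le (α := ℚ)).mpr hF1
  have : NeZero n := ⟨hn.ne'⟩
  have hweighted := mul_card_sdiff_add_mul_card_le_mul_choose (Fintype.card_fin n) hnk hsub hF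
    fun A hA B hB h => hd A hA B hB (disjoint_iff_inter_eq_empty.mp h)
  have hchoose : k * n.choose k ≤ n * (n - 1).choose (k - 1) := by
    obtain _ | k := k
    · simp
    obtain _ | n := n
    · omega
    rw [Nat.add_sub_cancel, Nat.add_sub_cancel, mul_comm, ← Nat.add_one_mul_choose_eq]
  have hQ : (n : ℚ) * #(F \ Fs) + k * #Fs ≤ n * (n - 1).choose (k - 1) := by
    exact_mod_cast hweighted.trans hchoose
  have hsplit : (#(F \ Fs) : ℚ) + #Fs = #F := by exact_mod_cast card_sdiff_add_card_eq_card hsub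
  have hnQ : (0 : ℚ) < n := by exact_mod_cast hn
  rw [div_mul_eq_mul_div, ← sub_le_iff_le_add', le_div_iff₀ hnQ]
  nlinarith
end

section
/- Let n ≥ 2k, let σ be a cyclic ordering of [n], and let F* ⊆ F ⊆ binom([n],k) be such that any two disjoint members of F lie in F*. Let S_σ(G) denote the set of members of G that appear as intervals of length k in σ. If S_σ(F \ F*) is nonempty, then |S_σ(F \ F*)| ≤ k and |S_σ(F*)| ≤ 2(k − |S_σ(F \ F*)|). -/
/-!
Fix an interval `A₀ ∈ S_σ(F \ F*)` starting at `z`. Every member of `F` meets `A₀`, since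
otherwise `A₀` would lie in `F*`; so every interval in `F` starts at `z - (k - 1) + d` for an
offset `d < 2k - 1`. The intervals at offsets `d` and `d + k` are disjoint, so if both lie in `F`
then both lie in `F*`. Hence the partner `d ± k` of an offset of `S_σ(F \ F*)` is no offset of
`S_σ(F)`, and counting these partners gives `2 |S_σ(F \ F*)| + |S_σ(F*)| ≤ 2k`.
-/

/-- The interval of length `k` starting at position `i` in the cyclic ordering `σ`. -/
def itv {n : ℕ} (σ : ZMod n ≃ Fin n) (i k : ℕ) : Finset (Fin n) :=
  (Finset.range k).image (fun j => σ (((i + j : ℕ) : ZMod n)))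

/-- The members of `G` appearing as intervals of length `k` in the cyclic ordering `σ`. -/
def Scyc {n : ℕ} (σ : ZMod n ≃ Fin n) (k : ℕ) (G : Finset (Finset (Fin n))) :
    Finset (Finset (Fin n)) :=
  G.filter (fun A => ∃ i < n, A = itv σ i k)

open Finset

namespace ZMod

variable {n k : ℕ}

theorem natCast_inj_of_lt {a b : ℕ} (ha : a < n) (hb : b < n) (h : (a : ZMod n) = b) : a = b := by
  simpa [val_cast_of_lt ha, val_cast_of_lt hb] using congrArg val h

def arc (z : ZMod n) (k : ℕ) : Finset (ZMod n) :=
  (range k).image fun j : ℕ => z + j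

theorem mem_arc {z x : ZMod n} : x ∈ arc z k ↔ ∃ j < k, z + j = x := by
  simp [arc]

theorem disjoint_arc_arc_add (hn : 2 * k ≤ n) (z : ZMod n) :
    Disjoint (arc z k) (arc (z + k) k) := by
  rw [disjoint_left]
  rintro _ hx hx'
  obtain ⟨j, hj, rfl⟩ := mem_arc.1 hx
  obtain ⟨j', hj', h⟩ := mem_arc.1 hx'
  have : ((k + j' : ℕ) : ZMod n) = j := by
    push_cast
    rwa [add_assoc, add_right_inj] at h
  have := natCast_inj_of_lt (by omega) (by omega) this
  omega

theorem exists_lt_eq_sub_add_of_not_disjoint {z w : ZMod n}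
    (h : ¬Disjoint (arc z k) (arc w k)) : ∃ d < 2 * k - 1, w = z - (k - 1 : ℕ) + d := by
  obtain ⟨_, hx, hx'⟩ := not_disjoint_iff.1 h
  obtain ⟨j, hj, rfl⟩ := mem_arc.1 hx
  obtain ⟨j', hj', h⟩ := mem_arc.1 hx'
  refine ⟨j + (k - 1) - j', by omega, ?_⟩
  have hd : ((j + (k - 1) - j' : ℕ) : ZMod n) + j' = j + (k - 1 : ℕ) := by
    rw [← Nat.cast_add, Nat.sub_add_cancel (by omega), Nat.cast_add]
  linear_combination h - hd

theorem arc_injective (hk : 0 < k) (hn : 2 * k ≤ n) {z w : ZMod n} (h : arc z k = arc w k) :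
    z = w := by
  obtain ⟨j, hj, hzj⟩ := mem_arc.1 (h ▸ (mem_arc.2 ⟨0, hk, by simp⟩ : z ∈ arc z k))
  obtain ⟨j', hj', hwj⟩ := mem_arc.1 (h ▸ (mem_arc.2 ⟨0, hk, by simp⟩ : w ∈ arc w k))
  have : ((j + j' : ℕ) : ZMod n) = (0 : ℕ) := by
    push_cast
    linear_combination hzj + hwj
  have := natCast_inj_of_lt (by omega) (by omega) this
  have hj0 : j = 0 := by omega
  simpa [hj0] using hzj.symm

end ZMod

theorem two_mul_card_add_card_le_of_add_mem_not_mem {k : ℕ} {P Q : Finset ℕ}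
    (hPQ : Disjoint P Q) (hP : P ⊆ range (2 * k)) (hQ : Q ⊆ range (2 * k))
    (hpair : ∀ d, d ∈ P ∪ Q → d + k ∈ P ∪ Q → d ∉ P ∧ d + k ∉ P) :
    2 * #P + #Q ≤ 2 * k := by
  -- The partner `d ± k` of a member of `P` lies in `range (2 * k)` but not in `P ∪ Q`.
  set partner : ℕ → ℕ := fun d => if d < k then d + k else d - k
  have hlt : ∀ d ∈ P, d < 2 * k := fun d hd => mem_range.1 (hP hd)
  have hinj : Set.InjOn partner P := by
    intro d hd d' hd' h
    have := hlt d hd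
    have := hlt d' hd'
    simp only [partner] at h
    split_ifs at h <;> omega
  have hdisj : Disjoint (P.image partner) (P ∪ Q) := by
    rw [disjoint_left]
    rintro _ hx hmem
    obtain ⟨d, hd, rfl⟩ := mem_image.1 hx
    have := hlt d hd
    simp only [partner] at hmem
    split_ifs at hmem with h
    · exact (hpair d (mem_union_left _ hd) hmem).1 hd
    · have hdk : d - k + k = d := by omega
      have := hpair (d - k) hmem (by rw [hdk]; exact mem_union_left _ hd)
      rw [hdk] at this
      exact this.2 hd
  have hsub : P.image partner ∪ (P ∪ Q) ⊆ range (2 * k) := by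
    refine union_subset ?_ (union_subset hP hQ)
    intro _ hx
    obtain ⟨d, hd, rfl⟩ := mem_image.1 hx
    have := hlt d hd
    simp only [partner, mem_range]
    split_ifs <;> omega
  calc 2 * #P + #Q = #(P.image partner ∪ (P ∪ Q)) := by
        rw [card_union_of_disjoint hdisj, card_union_of_disjoint hPQ, card_image_of_injOn hinj]
        ring
    _ ≤ 2 * k := (card_le_card hsub).trans (card_range _).le

open ZMod

section Scyc

variable {n k : ℕ} (σ : ZMod n ≃ Fin n)

theorem itv_eq_image_arc (i k : ℕ) : itv σ i k = (arc (i : ZMod n) k).image σ := by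
  simp [itv, arc, image_image, Function.comp_def]

/-- For `d < 2 * k - 1`, `nearItv σ z k d` runs over exactly the intervals of length `k` meeting
the one starting at `z`. -/
def nearItv (z : ZMod n) (k d : ℕ) : Finset (Fin n) :=
  (arc (z - ((k - 1 : ℕ) : ZMod n) + (d : ZMod n)) k).image σ

theorem disjoint_nearItv_add (hn : 2 * k ≤ n) (z : ZMod n) (d : ℕ) :
    Disjoint (nearItv σ z k d) (nearItv σ z k (d + k)) := by
  rw [nearItv, nearItv, disjoint_image σ.injective, Nat.cast_add, ← add_assoc]
  exact disjoint_arc_arc_add hn _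

theorem card_Scyc_eq_card_filter_nearItv (hk : 0 < k) (hn : 2 * k ≤ n) (z : ZMod n)
    {G : Finset (Finset (Fin n))} (hG : ∀ A ∈ G, ¬Disjoint A ((arc z k).image σ)) :
    #(Scyc σ k G) = #((range (2 * k - 1)).filter fun d => nearItv σ z k d ∈ G) := by
  have : NeZero n := ⟨by omega⟩
  symm
  refine card_bij (fun d _ => nearItv σ z k d) ?_ ?_ ?_
  · intro d hd
    refine mem_filter.2
      ⟨(mem_filter.1 hd).2, (z - ((k - 1 : ℕ) : ZMod n) + d).val, val_lt _, ?_⟩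
    rw [itv_eq_image_arc, natCast_zmod_val, nearItv]
  · intro d hd d' hd' h
    have hd := mem_range.1 (mem_filter.1 hd).1
    have hd' := mem_range.1 (mem_filter.1 hd').1
    exact natCast_inj_of_lt (by omega) (by omega)
      (add_left_cancel (arc_injective hk hn (image_injective σ.injective h :)))
  · intro A hA
    obtain ⟨hAG, i, -, rfl⟩ := mem_filter.1 hA
    rw [itv_eq_image_arc] at hAG ⊢
    obtain ⟨d, hd, hi⟩ := exists_lt_eq_sub_add_of_not_disjoint
      fun h => hG _ hAG ((disjoint_image σ.injective).2 h.symm)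
    exact ⟨d, mem_filter.2 ⟨mem_range.2 hd, by rwa [nearItv, ← hi]⟩, by rw [nearItv, hi]⟩

theorem two_mul_card_filter_nearItv_add_card_le (hn : 2 * k ≤ n) (z : ZMod n)
    {F Fs : Finset (Finset (Fin n))} (hsub : Fs ⊆ F)
    (hdisj : ∀ A ∈ F, ∀ B ∈ F, Disjoint A B → A ∈ Fs ∧ B ∈ Fs) :
    2 * #((range (2 * k - 1)).filter fun d => nearItv σ z k d ∈ F \ Fs) +
      #((range (2 * k - 1)).filter fun d => nearItv σ z k d ∈ Fs) ≤ 2 * k := by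
  set P := (range (2 * k - 1)).filter fun d => nearItv σ z k d ∈ F \ Fs
  set Q := (range (2 * k - 1)).filter fun d => nearItv σ z k d ∈ Fs
  have hF : ∀ d ∈ P ∪ Q, nearItv σ z k d ∈ F := by
    intro d hd
    rcases mem_union.1 hd with h | h
    · exact (mem_sdiff.1 (mem_filter.1 h).2).1
    · exact hsub (mem_filter.1 h).2
  have hFs : ∀ d, nearItv σ z k d ∈ Fs → d ∉ P :=
    fun d h hP => (mem_sdiff.1 (mem_filter.1 hP).2).2 h
  have hPQ : P ∪ Q ⊆ range (2 * k) :=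
    union_subset (filter_subset _ _) (filter_subset _ _) |>.trans
      (range_subset_range.2 (by omega))
  refine two_mul_card_add_card_le_of_add_mem_not_mem
    (disjoint_filter.2 fun _ _ h => (mem_sdiff.1 h).2) (subset_union_left.trans hPQ)
    (subset_union_right.trans hPQ) fun d hd hdk => ?_
  have hpair := hdisj _ (hF d hd) _ (hF _ hdk) (disjoint_nearItv_add σ hn z d)
  exact ⟨hFs _ hpair.1, hFs _ hpair.2⟩

end Scyc

theorem stmt_4_general (n k : ℕ) (hnk : 2 * k ≤ n) (σ : ZMod n ≃ Fin n)
    (F Fs : Finset (Finset (Fin n))) (hsub : Fs ⊆ F)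
    (hd : ∀ A ∈ F, ∀ B ∈ F, A ∩ B = ∅ → A ∈ Fs ∧ B ∈ Fs)
    (hne : (Scyc σ k (F \ Fs)).Nonempty) :
    (Scyc σ k (F \ Fs)).card ≤ k ∧
      (Scyc σ k Fs).card ≤ 2 * (k - (Scyc σ k (F \ Fs)).card) := by
  obtain ⟨A₀, hA₀⟩ := hne
  obtain ⟨hA₀, i₀, -, rfl⟩ := mem_filter.1 hA₀
  obtain ⟨hA₀F, hA₀Fs⟩ := mem_sdiff.1 hA₀
  have hdisj : ∀ A ∈ F, ∀ B ∈ F, Disjoint A B → A ∈ Fs ∧ B ∈ Fs :=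
    fun A hA B hB h => hd A hA B hB (disjoint_iff_inter_eq_empty.1 h)
  have hmeet : ∀ A ∈ F, ¬Disjoint A (itv σ i₀ k) :=
    fun A hA h => hA₀Fs (hdisj A hA _ hA₀F h).2
  have hk : 0 < k := by
    by_contra! hk
    exact hmeet _ hA₀F (by simp [itv, Nat.le_zero.1 hk])
  rw [itv_eq_image_arc] at hmeet
  rw [card_Scyc_eq_card_filter_nearItv σ hk hnk _ fun A hA => hmeet A (mem_sdiff.1 hA).1,
    card_Scyc_eq_card_filter_nearItv σ hk hnk _ fun A hA => hmeet A (hsub hA)]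
  have := two_mul_card_filter_nearItv_add_card_le σ hnk (i₀ : ZMod n) hsub hdisj
  omega

theorem stmt_4 (n k : ℕ) (hnk : 2 * k ≤ n) (σ : ZMod n ≃ Fin n)
    (F Fs : Finset (Finset (Fin n))) (hsub : Fs ⊆ F)
    (hF : ∀ A ∈ F, A.card = k)
    (hd : ∀ A ∈ F, ∀ B ∈ F, A ∩ B = ∅ → A ∈ Fs ∧ B ∈ Fs)
    (hne : (Scyc σ k (F \ Fs)).Nonempty) :
    (Scyc σ k (F \ Fs)).card ≤ k ∧
      (Scyc σ k Fs).card ≤ 2 * (k - (Scyc σ k (F \ Fs)).card) :=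
  stmt_4_general n k hnk σ F Fs hsub hd hne
end

section
/- Suppose k < n and F ⊆ binom([n],k) satisfies |F| ≥ C(n-1,k-1). Then Σ_{A ∈ F} [ |α¹_F(A)| + ((n-k-1)/(2(n-k)))·|α²_F(A)| ] ≤ C(n-1, k-1). -/
/-- The shade of `D` in `F`: all members of `F` containing `D`. -/
def shade {n : ℕ} (F : Finset (Finset (Fin n))) (D : Finset (Fin n)) :
    Finset (Finset (Fin n)) :=
  F.filter (fun B => D ⊆ B)

/-- `alpha F i A` is the set of `x ∈ A` such that exactly `i` members of `F`
contain `A \ {x}`. -/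
def alpha {n : ℕ} (F : Finset (Finset (Fin n))) (i : ℕ) (A : Finset (Fin n)) :
    Finset (Fin n) :=
  A.filter (fun x => (shade F (A.erase x)).card = i)

/-!
Write `dᵢ` for the number of `(k-1)`-sets lying in exactly `i` members of `F`. Sending `(A, x)`
to `A \ {x}` shows `∑_A |αⁱ_F(A)| = i dᵢ`, so the left side is `d₁ + (n-k-1)/(n-k) d₂`.
A `(k-1)`-set lying in exactly `i` members of `F` lies in `n-k+1-i` of the `k`-sets missing from
`F`, and each missing `k`-set contains at most `k` of them. Double counting gives
`(n-k) d₁ + (n-k-1) d₂ ≤ k (C(n,k) - |F|) ≤ k (C(n,k) - C(n-1,k-1)) = (n-k) C(n-1,k-1)`.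
-/

open Finset
open scoped FinsetFamily

section SupersetCounting

variable {α : Type*} [DecidableEq α]

theorem card_filter_subset_le_of_sized {S : Finset (Finset α)} {r : ℕ}
    (hS : (S : Set (Finset α)).Sized r) {B : Finset α} (hB : #B = r + 1) :
    #{D ∈ S | D ⊆ B} ≤ r + 1 := by
  rw [← hB]
  refine (card_le_card fun D hD => ?_).trans (card_image_le (s := B) (f := B.erase))
  rw [mem_filter] at hD
  obtain ⟨a, ha, rfl⟩ := exists_eq_insert_iff.2 ⟨hD.2, by rw [hS hD.1, hB]⟩
  exact mem_image.2 ⟨a, mem_insert_self a D, erase_insert ha⟩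

theorem sum_card_filter_superset_le {S K : Finset (Finset α)} {r : ℕ}
    (hS : (S : Set (Finset α)).Sized r) (hK : (K : Set (Finset α)).Sized (r + 1)) :
    ∑ D ∈ S, #{B ∈ K | D ⊆ B} ≤ (r + 1) * #K := by
  calc ∑ D ∈ S, #{B ∈ K | D ⊆ B} = ∑ B ∈ K, #{D ∈ S | D ⊆ B} := by
        exact sum_card_bipartiteAbove_eq_sum_card_bipartiteBelow _
    _ ≤ #K • (r + 1) :=
        sum_le_card_nsmul _ _ _ fun B hB => card_filter_subset_le_of_sized hS (hK hB)
    _ = (r + 1) * #K := by rw [smul_eq_mul, mul_comm]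

theorem card_filter_superset_powersetCard [Fintype α] (s : Finset α) :
    #{B ∈ powersetCard (#s + 1) (univ : Finset α) | s ⊆ B} = Fintype.card α - #s := by
  rw [← card_compl, ← card_image_of_injOn (insert_inj_on' s)]
  congr 1
  ext B
  simp only [mem_filter, mem_powersetCard, subset_univ, true_and, mem_image, mem_compl,
    exists_eq_insert_iff]
  grind

end SupersetCounting

def shadowOfDegree {n : ℕ} (F : Finset (Finset (Fin n))) (i : ℕ) : Finset (Finset (Fin n)) :=
  {D ∈ ∂ F | #(shade F D) = i}

section ShadowOfDegree

variable {n k : ℕ} {F : Finset (Finset (Fin n))}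

theorem image_erase_alpha (hF : (F : Set (Finset (Fin n))).Sized k) {A : Finset (Fin n)}
    (hA : A ∈ F) (i : ℕ) :
    (alpha F i A).image A.erase = {D ∈ shadowOfDegree F i | D ⊆ A} := by
  ext D
  simp only [alpha, shadowOfDegree, mem_image, mem_filter]
  constructor
  · rintro ⟨x, ⟨hx, hi⟩, rfl⟩
    exact ⟨⟨erase_mem_shadow hA hx, hi⟩, erase_subset x A⟩
  · rintro ⟨⟨hD, hi⟩, hDA⟩
    obtain ⟨B, hB, -, hcard⟩ := mem_shadow_iff_exists_mem_card_add_one.1 hD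
    obtain ⟨x, hx, rfl⟩ := exists_eq_insert_iff.2 ⟨hDA, by rw [← hcard, hF hB, hF hA]⟩
    exact ⟨x, ⟨mem_insert_self x D, by rwa [erase_insert hx]⟩, erase_insert hx⟩

theorem sum_card_alpha (hF : (F : Set (Finset (Fin n))).Sized k) (i : ℕ) :
    ∑ A ∈ F, #(alpha F i A) = i * #(shadowOfDegree F i) := by
  calc ∑ A ∈ F, #(alpha F i A) = ∑ A ∈ F, #{D ∈ shadowOfDegree F i | D ⊆ A} := by
        refine sum_congr rfl fun A hA => ?_
        rw [← image_erase_alpha hF hA]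
        exact (card_image_of_injOn (A.erase_injOn.mono (coe_subset.2 (filter_subset _ _)))).symm
    _ = ∑ D ∈ shadowOfDegree F i, #(shade F D) := by
        exact sum_card_bipartiteAbove_eq_sum_card_bipartiteBelow _
    _ = i * #(shadowOfDegree F i) :=
        (sum_const_nat fun D hD => (mem_filter.1 hD).2).trans (mul_comm _ _)

theorem card_filter_superset_powersetCard_sdiff (hF : (F : Set (Finset (Fin n))).Sized k)
    {D : Finset (Fin n)} (hD : D ∈ ∂ F) :
    #{B ∈ powersetCard k (univ : Finset (Fin n)) \ F | D ⊆ B} = n - #D - #(shade F D) := by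
  obtain ⟨A, hA, -, hcard⟩ := mem_shadow_iff_exists_mem_card_add_one.1 hD
  have hFsub : shade F D ⊆ {B ∈ powersetCard k (univ : Finset (Fin n)) | D ⊆ B} := by
    intro B hB
    rw [shade, mem_filter] at hB
    exact mem_filter.2 ⟨mem_powersetCard.2 ⟨subset_univ B, hF hB.1⟩, hB.2⟩
  have hsplit : {B ∈ powersetCard k (univ : Finset (Fin n)) \ F | D ⊆ B} =
      {B ∈ powersetCard k (univ : Finset (Fin n)) | D ⊆ B} \ shade F D := by
    ext B; simp only [shade, mem_filter, mem_sdiff]; tauto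
  rw [hsplit, card_sdiff_of_subset hFsub, ← hF hA, hcard, card_filter_superset_powersetCard,
    Fintype.card_fin]

theorem weighted_card_shadowOfDegree_le {r : ℕ} (hF : (F : Set (Finset (Fin n))).Sized (r + 1)) :
    (n - (r + 1)) * #(shadowOfDegree F 1) + (n - (r + 1) - 1) * #(shadowOfDegree F 2) ≤
      (r + 1) * #(powersetCard (r + 1) (univ : Finset (Fin n)) \ F) := by
  set K := powersetCard (r + 1) (univ : Finset (Fin n)) \ F
  have hdisj : Disjoint (shadowOfDegree F 1) (shadowOfDegree F 2) :=
    disjoint_filter.2 fun D _ h1 h2 => by omega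
  have hcount (i : ℕ) : ∀ D ∈ shadowOfDegree F i, #{B ∈ K | D ⊆ B} = n - r - i := by
    intro D hD
    obtain ⟨hD, hi⟩ := mem_filter.1 hD
    rw [card_filter_superset_powersetCard_sdiff hF hD, hF.shadow hD, hi, Nat.add_sub_cancel]
  have hS :
      ((shadowOfDegree F 1 ∪ shadowOfDegree F 2 : Finset _) : Set (Finset (Fin n))).Sized r :=
    hF.shadow.mono (coe_subset.2 (union_subset (filter_subset _ _) (filter_subset _ _)))
  have hK : (K : Set (Finset (Fin n))).Sized (r + 1) := fun B hB =>
    (mem_powersetCard.1 (mem_sdiff.1 hB).1).2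
  calc _ = ∑ D ∈ shadowOfDegree F 1 ∪ shadowOfDegree F 2, #{B ∈ K | D ⊆ B} := by
        rw [sum_union hdisj, sum_const_nat (hcount 1), sum_const_nat (hcount 2)]
        grind
    _ ≤ (r + 1) * #K := sum_card_filter_superset_le hS hK

end ShadowOfDegree

theorem succ_mul_choose_sub_choose_pred (n r : ℕ) :
    (r + 1) * (n.choose (r + 1) - (n - 1).choose r) = (n - (r + 1)) * (n - 1).choose r := by
  obtain _ | m := n
  · simp
  rw [Nat.add_sub_cancel, Nat.add_sub_add_right, Nat.choose_succ_succ', Nat.add_sub_cancel_left,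
    mul_comm, Nat.choose_succ_right_eq, mul_comm]

theorem weighted_card_shadowOfDegree_le_choose {n k : ℕ} {F : Finset (Finset (Fin n))}
    (hF : (F : Set (Finset (Fin n))).Sized k) (hsize : (n - 1).choose (k - 1) ≤ #F) :
    (n - k) * #(shadowOfDegree F 1) + (n - k - 1) * #(shadowOfDegree F 2) ≤
      (n - k) * (n - 1).choose (k - 1) := by
  obtain _ | r := k
  · have : ∂ F = ∅ := subset_empty.1 <|
      (shadow_mono fun A hA => mem_singleton.2 (card_eq_zero.1 (hF hA))).trans_eq
        shadow_singleton_empty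
    simp [shadowOfDegree, this]
  · have hFsub : F ⊆ powersetCard (r + 1) univ := fun A hA =>
      mem_powersetCard.2 ⟨subset_univ A, hF hA⟩
    calc _ ≤ (r + 1) * #(powersetCard (r + 1) (univ : Finset (Fin n)) \ F) :=
          weighted_card_shadowOfDegree_le hF
      _ ≤ (r + 1) * (n.choose (r + 1) - (n - 1).choose r) := by
          rw [card_sdiff_of_subset hFsub, card_powersetCard, card_univ, Fintype.card_fin]
          gcongr
          exact hsize
      _ = _ := succ_mul_choose_sub_choose_pred n r

theorem stmt_8 (n k : ℕ) (hkn : k < n)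
    (F : Finset (Finset (Fin n))) (hF : ∀ A ∈ F, A.card = k)
    (hsize : (n - 1).choose (k - 1) ≤ F.card) :
    ∑ A ∈ F, (((alpha F 1 A).card : ℚ) +
        ((n : ℚ) - k - 1) / (2 * ((n : ℚ) - k)) * (alpha F 2 A).card) ≤
      (n - 1).choose (k - 1) := by
  have hsized : (F : Set (Finset (Fin n))).Sized k := fun A hA => hF A hA
  rw [sum_add_distrib, ← mul_sum, ← Nat.cast_sum, ← Nat.cast_sum, sum_card_alpha hsized,
    sum_card_alpha hsized]
  set d₁ := #(shadowOfDegree F 1)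
  set d₂ := #(shadowOfDegree F 2)
  have hgap : ((n - k : ℕ) : ℚ) = n - k := Nat.cast_sub hkn.le
  have hgap' : ((n - k - 1 : ℕ) : ℚ) = n - k - 1 := by
    rw [Nat.cast_sub (Nat.le_sub_of_add_le' hkn), hgap, Nat.cast_one]
  have hpos : (0 : ℚ) < n - k := by rw [← hgap]; exact_mod_cast Nat.sub_pos_of_lt hkn
  have hbound :
      ((n : ℚ) - k) * d₁ + (n - k - 1) * d₂ ≤ (n - k) * (n - 1).choose (k - 1) := by
    have := (Nat.cast_le (α := ℚ)).2 (weighted_card_shadowOfDegree_le_choose hsized hsize)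
    rwa [Nat.cast_add, Nat.cast_mul, Nat.cast_mul, Nat.cast_mul, hgap', hgap] at this
  push_cast
  calc _ = (((n : ℚ) - k) * d₁ + (n - k - 1) * d₂) / (n - k) := by field_simp
    _ ≤ _ := by rw [div_le_iff₀ hpos]; linarith
end

section
/- Let k < n and F ⊆ binom([n],k) with complement F^C = binom([n],k) \ F. Then Σ_{A ∈ F^C} ( |α^{n-k}_{F^C}(A)| + |α^{n-k-1}_{F^C}(A)| ) = Σ_{A ∈ F} ( (n-k)|α¹_F(A)| + ((n-k-1)/2)|α²_F(A)| ). -/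
lemma count_lemma {n k : ℕ} (hk : 1 ≤ k) (S : Finset (Finset (Fin n)))
    (hS : S ⊆ Finset.powersetCard k Finset.univ) (i : ℕ) :
    ∑ A ∈ S, (alpha S i A).card
      = i * ((Finset.powersetCard (k-1) (Finset.univ : Finset (Fin n))).filter
          (fun D => (shade S D).card = i)).card := by
  have hcard : ∀ A ∈ S, A.card = k := fun A hA =>
    (Finset.mem_powersetCard.mp (hS hA)).2
  calc ∑ A ∈ S, (alpha S i A).card
      = ∑ p ∈ S.sigma (fun A => A),
          (if (shade S (p.1.erase p.2)).card = i then 1 else 0) := by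
        rw [Finset.sum_sigma]
        exact Finset.sum_congr rfl fun A _ => by rw [alpha, Finset.card_filter]
    _ = ∑ p ∈ (Finset.powersetCard (k-1) (Finset.univ : Finset (Fin n))).sigma
          (fun D => shade S D),
          (if (shade S p.1).card = i then 1 else 0) := by
        apply Finset.sum_bij
          (fun p _ => (⟨p.1.erase p.2, p.1⟩ : Σ _ : Finset (Fin n), Finset (Fin n)))
        · rintro ⟨A, x⟩ hp
          obtain ⟨hAS, hxA⟩ := Finset.mem_sigma.mp hp
          refine Finset.mem_sigma.mpr ⟨?_, ?_⟩
          · refine Finset.mem_powersetCard.mpr ⟨Finset.subset_univ _, ?_⟩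
            rw [Finset.card_erase_of_mem hxA, hcard A hAS]
          · exact Finset.mem_filter.mpr ⟨hAS, Finset.erase_subset _ _⟩
        · rintro ⟨A, x⟩ hA ⟨B, y⟩ hB h
          have h1 : A.erase x = B.erase y := congrArg Sigma.fst h
          have hAB : A = B := congrArg Sigma.snd h
          subst hAB
          have hxA : x ∈ A := (Finset.mem_sigma.mp hA).2
          have hxy : x = y := by
            by_contra hne
            have hx : x ∈ A.erase y := Finset.mem_erase.mpr ⟨hne, hxA⟩
            rw [← h1] at hx
            exact (Finset.mem_erase.mp hx).1 rfl
          subst hxy; rfl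
        · rintro ⟨D, B⟩ hDB
          obtain ⟨hD, hB⟩ := Finset.mem_sigma.mp hDB
          obtain ⟨hBS, hsub⟩ := Finset.mem_filter.mp hB
          have hDc : D.card = k - 1 := (Finset.mem_powersetCard.mp hD).2
          have hBc : B.card = k := hcard B hBS
          have hone : (B \ D).card = 1 := by
            rw [Finset.card_sdiff_of_subset hsub, hBc, hDc]; omega
          obtain ⟨x, hx⟩ := Finset.card_eq_one.mp hone
          have hxBD : x ∈ B \ D := hx ▸ Finset.mem_singleton_self x
          have hxB : x ∈ B := (Finset.mem_sdiff.mp hxBD).1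
          refine ⟨⟨B, x⟩, Finset.mem_sigma.mpr ⟨hBS, hxB⟩, ?_⟩
          have : B.erase x = D := by
            rw [Finset.erase_eq, ← hx, Finset.sdiff_sdiff_self_left,
              Finset.inter_eq_right.mpr hsub]
          simp [this]
        · rintro ⟨A, x⟩ _; rfl
    _ = ∑ D ∈ Finset.powersetCard (k-1) (Finset.univ : Finset (Fin n)),
          (if (shade S D).card = i then (shade S D).card else 0) := by
        rw [Finset.sum_sigma]
        refine Finset.sum_congr rfl fun D _ => ?_
        show (∑ _B ∈ shade S D, if (shade S D).card = i then 1 else 0) = _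
        rw [Finset.sum_const, smul_eq_mul]
        split <;> simp
    _ = ∑ D ∈ (Finset.powersetCard (k-1) (Finset.univ : Finset (Fin n))).filter
          (fun D => (shade S D).card = i), (shade S D).card :=
        (Finset.sum_filter _ _).symm
    _ = ∑ _D ∈ (Finset.powersetCard (k-1) (Finset.univ : Finset (Fin n))).filter
          (fun D => (shade S D).card = i), i :=
        Finset.sum_congr rfl fun D hD => (Finset.mem_filter.mp hD).2
    _ = i * _ := by rw [Finset.sum_const, smul_eq_mul, mul_comm]

lemma shade_all_card {n k : ℕ} (hk : 1 ≤ k) (hkn : k ≤ n) (D : Finset (Fin n))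
    (hD : D.card = k - 1) :
    (shade (Finset.powersetCard k Finset.univ) D).card = n - k + 1 := by
  have himg : shade (Finset.powersetCard k Finset.univ) D
      = (Finset.univ \ D).image (fun x => insert x D) := by
    ext B
    simp only [shade, Finset.mem_filter, Finset.mem_powersetCard_univ,
      Finset.mem_image, Finset.mem_sdiff, Finset.mem_univ, true_and]
    constructor
    · rintro ⟨hBk, hDB⟩
      have hss : D ⊂ B := hDB.ssubset_of_ne (by
        intro h; rw [h] at hD; omega)
      obtain ⟨x, hxB, hxD⟩ := Finset.exists_of_ssubset hss
      refine ⟨x, hxD, ?_⟩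
      apply Finset.eq_of_subset_of_card_le (Finset.insert_subset hxB hDB)
      rw [Finset.card_insert_of_notMem hxD, hD, hBk]; omega
    · rintro ⟨x, hxD, rfl⟩
      exact ⟨by rw [Finset.card_insert_of_notMem hxD, hD]; omega,
        Finset.subset_insert _ _⟩
  rw [himg, Finset.card_image_of_injOn, Finset.card_sdiff_of_subset (Finset.subset_univ D)]
  · rw [Finset.card_univ, Fintype.card_fin, hD]; omega
  · intro x hx y hy hxy
    simp only [Finset.mem_coe, Finset.mem_sdiff, Finset.mem_univ, true_and] at hx hy
    have hxy' : insert x D = insert y D := hxy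
    have : x ∈ insert y D := hxy' ▸ Finset.mem_insert_self x D
    rcases Finset.mem_insert.mp this with h | h
    · exact h
    · exact absurd h hx

theorem stmt_10 (n k : ℕ) (hkn : k < n)
    (F : Finset (Finset (Fin n))) (hF : F ⊆ Finset.powersetCard k Finset.univ) :
    ∑ A ∈ Finset.powersetCard k (Finset.univ : Finset (Fin n)) \ F,
        (((alpha (Finset.powersetCard k Finset.univ \ F) (n - k) A).card : ℚ) +
          ((alpha (Finset.powersetCard k Finset.univ \ F) (n - k - 1) A).card : ℚ)) =
      ∑ A ∈ F, (((n : ℚ) - k) * (alpha F 1 A).card +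
        (((n : ℚ) - k - 1) / 2) * (alpha F 2 A).card) := by
  rcases Nat.eq_zero_or_pos k with rfl | hk
  · have hL : ∀ A ∈ Finset.powersetCard 0 (Finset.univ : Finset (Fin n)) \ F,
        (((alpha (Finset.powersetCard 0 Finset.univ \ F) (n - 0) A).card : ℚ) +
          ((alpha (Finset.powersetCard 0 Finset.univ \ F) (n - 0 - 1) A).card : ℚ)) = 0 := by
      intro A hA
      have : A = ∅ := Finset.card_eq_zero.mp
        (Finset.mem_powersetCard.mp (Finset.mem_sdiff.mp hA).1).2
      subst this; simp [alpha]
    have hR : ∀ A ∈ F,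
        (((n : ℚ) - ((0:ℕ):ℚ)) * (alpha F 1 A).card +
          (((n : ℚ) - ((0:ℕ):ℚ) - 1) / 2) * (alpha F 2 A).card) = 0 := by
      intro A hA
      have : A = ∅ := Finset.card_eq_zero.mp
        (Finset.mem_powersetCard.mp (hF hA)).2
      subst this; simp [alpha]
    rw [Finset.sum_congr rfl hL, Finset.sum_congr rfl hR]; simp
  · set G : Finset (Finset (Fin n)) :=
      Finset.powersetCard k (Finset.univ : Finset (Fin n)) \ F with hGdef
    have hG : G ⊆ Finset.powersetCard k Finset.univ := Finset.sdiff_subset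
    have hshade : ∀ D ∈ Finset.powersetCard (k-1) (Finset.univ : Finset (Fin n)),
        (shade G D).card = n - k + 1 - (shade F D).card ∧
          (shade F D).card ≤ n - k + 1 := by
      intro D hD
      have hDc : D.card = k - 1 := (Finset.mem_powersetCard.mp hD).2
      have hall := shade_all_card hk hkn.le D hDc
      have hsub : shade F D ⊆ shade (Finset.powersetCard k Finset.univ) D :=
        Finset.filter_subset_filter _ hF
      have hle : (shade F D).card ≤ n - k + 1 := hall ▸ Finset.card_le_card hsub
      have hsd : shade G D = shade (Finset.powersetCard k Finset.univ) D \ shade F D := by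
        ext B
        simp only [shade, hGdef, Finset.mem_filter, Finset.mem_sdiff]
        tauto
      rw [hsd, Finset.card_sdiff_of_subset hsub, hall]
      exact ⟨rfl, hle⟩
    have e1 : (Finset.powersetCard (k-1) (Finset.univ : Finset (Fin n))).filter
          (fun D => (shade G D).card = n - k)
        = (Finset.powersetCard (k-1) (Finset.univ : Finset (Fin n))).filter
          (fun D => (shade F D).card = 1) := by
      refine Finset.filter_congr fun D hD => ?_
      obtain ⟨h1, h2⟩ := hshade D hD
      rw [h1]; omega
    have e2 : (Finset.powersetCard (k-1) (Finset.univ : Finset (Fin n))).filter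
          (fun D => (shade G D).card = n - k - 1)
        = (Finset.powersetCard (k-1) (Finset.univ : Finset (Fin n))).filter
          (fun D => (shade F D).card = 2) := by
      refine Finset.filter_congr fun D hD => ?_
      obtain ⟨h1, h2⟩ := hshade D hD
      rw [h1]; omega
    have c1 := count_lemma hk F hF 1
    have c2 := count_lemma hk F hF 2
    have c3 := count_lemma hk G hG (n - k)
    have c4 := count_lemma hk G hG (n - k - 1)
    rw [e1] at c3
    rw [e2] at c4
    set N1 : ℕ := ((Finset.powersetCard (k-1) (Finset.univ : Finset (Fin n))).filter
      (fun D => (shade F D).card = 1)).card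
    set N2 : ℕ := ((Finset.powersetCard (k-1) (Finset.univ : Finset (Fin n))).filter
      (fun D => (shade F D).card = 2)).card
    have q1 : ∑ A ∈ F, ((alpha F 1 A).card : ℚ) = N1 := by
      rw [← Nat.cast_sum, c1]; push_cast; ring
    have q2 : ∑ A ∈ F, ((alpha F 2 A).card : ℚ) = 2 * N2 := by
      rw [← Nat.cast_sum, c2]; push_cast; ring
    have q3 : ∑ A ∈ G, ((alpha G (n - k) A).card : ℚ) = ((n : ℚ) - k) * N1 := by
      rw [← Nat.cast_sum, c3]; push_cast [Nat.cast_sub hkn.le]; ring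
    have q4 : ∑ A ∈ G, ((alpha G (n - k - 1) A).card : ℚ)
        = ((n : ℚ) - k - 1) * N2 := by
      rw [← Nat.cast_sum, c4, Nat.cast_mul, Nat.cast_sub (by omega : 1 ≤ n - k),
        Nat.cast_sub hkn.le]
      push_cast; ring
    rw [Finset.sum_add_distrib, q3, q4, Finset.sum_add_distrib,
      ← Finset.mul_sum, ← Finset.mul_sum, q1, q2]
    ring
end

section
/- Let F ⊆ binom([n],k) with d ≤ k. Then for each A ∈ F, the number of d-subsets D of A with A ∈ ∇*_F(D) equals C(k,d) − C(|A \ α¹_F(A)|, d) + C(|α²_F(A)|, d), where ∇*_F(D) = {A ∈ ∇_F(D) : D ∩ α¹_F(A) ≠ ∅ or D ⊆ α²_F(A)}. -/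
/-- `shadeStar F D`: members `A` of the shade of `D` with `D ∩ α¹_F(A) ≠ ∅` or
`D ⊆ α²_F(A)`. -/
def shadeStar {n : ℕ} (F : Finset (Finset (Fin n))) (D : Finset (Fin n)) :
    Finset (Finset (Fin n)) :=
  (shade F D).filter (fun A => (D ∩ alpha F 1 A).Nonempty ∨ D ⊆ alpha F 2 A)

/-!
Since `α¹_F(A)` and `α²_F(A)` are disjoint subsets of `A`, a `d`-subset of `A` cannot both meet
`α¹_F(A)` and lie inside `α²_F(A)`. So the count splits into the `d`-subsets of `A` meeting
`α¹_F(A)`, which are all `d`-subsets of `A` except those of `A \ α¹_F(A)`, plus the `d`-subsets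
of `α²_F(A)`.
-/

namespace Finset

variable {α : Type*} [DecidableEq α]

theorem filter_powersetCard_subset_of_subset {s t : Finset α} (hts : t ⊆ s) (n : ℕ) :
    {D ∈ s.powersetCard n | D ⊆ t} = t.powersetCard n := by
  ext D
  simp only [mem_filter, mem_powersetCard]
  exact ⟨fun ⟨⟨_, hD⟩, hDt⟩ => ⟨hDt, hD⟩, fun ⟨hDt, hD⟩ => ⟨⟨hDt.trans hts, hD⟩, hDt⟩⟩

theorem card_filter_powersetCard_inter_nonempty (s t : Finset α) (n : ℕ) :
    #{D ∈ s.powersetCard n | (D ∩ t).Nonempty} = (#s).choose n - (#(s \ t)).choose n := by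
  have hmiss : {D ∈ s.powersetCard n | ¬(D ∩ t).Nonempty} = (s \ t).powersetCard n := by
    rw [← filter_powersetCard_subset_of_subset sdiff_subset]
    refine filter_congr fun D hD => ?_
    rw [not_nonempty_iff_eq_empty, ← disjoint_iff_inter_eq_empty,
      subset_sdiff, and_iff_right (mem_powersetCard.1 hD).1]
  have hsplit := card_filter_add_card_filter_not (s := s.powersetCard n)
    (p := fun D => (D ∩ t).Nonempty)
  rw [hmiss, card_powersetCard, card_powersetCard] at hsplit
  omega

theorem card_filter_powersetCard_inter_nonempty_or_subset {s t u : Finset α} (hus : u ⊆ s)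
    (htu : Disjoint t u) (n : ℕ) :
    #{D ∈ s.powersetCard n | (D ∩ t).Nonempty ∨ D ⊆ u} =
      (#s).choose n - (#(s \ t)).choose n + (#u).choose n := by
  have hdisj : Disjoint {D ∈ s.powersetCard n | (D ∩ t).Nonempty}
      {D ∈ s.powersetCard n | D ⊆ u} := by
    refine disjoint_filter_filter' _ _ ?_
    intro P hPt hPu D hD
    obtain ⟨x, hx⟩ := hPt D hD
    rw [mem_inter] at hx
    exact disjoint_left.1 htu hx.2 (hPu D hD hx.1)
  rw [filter_or, card_union_of_disjoint hdisj, card_filter_powersetCard_inter_nonempty,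
    filter_powersetCard_subset_of_subset hus, card_powersetCard]

end Finset

section Shade

variable {n : ℕ} {F : Finset (Finset (Fin n))} {A D : Finset (Fin n)}

theorem alpha_subset (F : Finset (Finset (Fin n))) (i : ℕ) (A : Finset (Fin n)) :
    alpha F i A ⊆ A :=
  Finset.filter_subset _ _

theorem disjoint_alpha {i j : ℕ} (hij : i ≠ j) : Disjoint (alpha F i A) (alpha F j A) := by
  rw [Finset.disjoint_left]
  intro x hxi hxj
  exact hij ((Finset.mem_filter.1 hxi).2.symm.trans (Finset.mem_filter.1 hxj).2)

theorem mem_shadeStar_iff (hA : A ∈ F) (hDA : D ⊆ A) :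
    A ∈ shadeStar F D ↔ (D ∩ alpha F 1 A).Nonempty ∨ D ⊆ alpha F 2 A := by
  simp only [shadeStar, shade, Finset.mem_filter, hA, hDA, true_and]

end Shade

theorem stmt_13_general (n k d : ℕ)
    (F : Finset (Finset (Fin n))) (hF : ∀ A ∈ F, A.card = k)
    (A : Finset (Fin n)) (hA : A ∈ F) :
    ((Finset.powersetCard d A).filter (fun D => A ∈ shadeStar F D)).card =
      k.choose d - ((A \ alpha F 1 A).card).choose d + ((alpha F 2 A).card).choose d := by
  rw [Finset.filter_congr fun D hD => mem_shadeStar_iff hA (Finset.mem_powersetCard.1 hD).1,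
    ← hF A hA]
  exact Finset.card_filter_powersetCard_inter_nonempty_or_subset (alpha_subset F 2 A)
    (disjoint_alpha (by norm_num)) d

theorem stmt_13 (n k d : ℕ) (hdk : d ≤ k)
    (F : Finset (Finset (Fin n))) (hF : ∀ A ∈ F, A.card = k)
    (A : Finset (Fin n)) (hA : A ∈ F) :
    ((Finset.powersetCard d A).filter (fun D => A ∈ shadeStar F D)).card =
      k.choose d - ((A \ alpha F 1 A).card).choose d + ((alpha F 2 A).card).choose d :=
  stmt_13_general n k d F hF A hA
end

section
/- If {D_1,...,D_{d+1}} is a d-simplex consisting of (d+1)-element subsets of [n], then |D_1 ∪ ... ∪ D_{d+1}| ≤ 2(d+1); in particular it is a d-cluster. -/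
/-- A `d`-simplex: `d+1` sets with empty total intersection such that any `d`
of them have nonempty intersection. -/
def IsSimplex {n : ℕ} (d : ℕ) (S : Finset (Finset (Fin n))) : Prop :=
  S.card = d + 1 ∧ S.inf id = ∅ ∧ ∀ A ∈ S, ((S.erase A).inf id).Nonempty

/-- A `d`-simplex-cluster (of `k`-sets): a `d`-simplex whose union has size at most `2k`. -/
def IsSimplexCluster {n : ℕ} (k d : ℕ) (S : Finset (Finset (Fin n))) : Prop :=
  IsSimplex d S ∧ (S.sup id).card ≤ 2 * k

/-!
Pick `x_A` in the intersection of all members of the family other than `A`. Emptiness of the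
total intersection forces `x_A ∉ A`, so the `x_A` are distinct, and each member `D` contains the
`|S| - 1` points `x_A` with `A ≠ D`. A member of size at most `k` therefore has at most
`k + 1 - |S|` points outside `T = {x_A}`, and the union has at most `|T| + |S| (k + 1 - |S|)`
points. For a `d`-simplex of `(d+1)`-sets this is `2 (d + 1)`.
-/

namespace Finset

variable {α : Type*} [DecidableEq α]

theorem card_sup_le_card_add_sum_card_sdiff (S : Finset (Finset α)) (T : Finset α) :
    (S.sup id).card ≤ T.card + ∑ D ∈ S, (D \ T).card := by
  have hsub : S.sup id ⊆ T ∪ S.biUnion (· \ T) := by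
    intro y hy
    obtain ⟨D, hD, hyD⟩ := mem_sup.mp hy
    by_cases hyT : y ∈ T
    · exact mem_union_left _ hyT
    · exact mem_union_right _ (mem_biUnion.mpr ⟨D, hD, mem_sdiff.mpr ⟨hyD, hyT⟩⟩)
  calc (S.sup id).card ≤ (T ∪ S.biUnion (· \ T)).card := card_le_card hsub
    _ ≤ T.card + (S.biUnion (· \ T)).card := card_union_le _ _
    _ ≤ T.card + ∑ D ∈ S, (D \ T).card := Nat.add_le_add_left card_biUnion_le _

theorem exists_notMem_forall_mem_of_inf_eq_empty [Fintype α] {S : Finset (Finset α)}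
    {A : Finset α} (hinf : S.inf id = ∅) (hne : ((S.erase A).inf id).Nonempty) :
    ∃ x ∉ A, ∀ B ∈ S, B ≠ A → x ∈ B := by
  obtain ⟨x, hx⟩ := hne
  have hmem : ∀ B ∈ S, B ≠ A → x ∈ B := fun B hB hBA =>
    inf_le (f := id) (mem_erase.mpr ⟨hBA, hB⟩) hx
  refine ⟨x, fun hxA => ?_, hmem⟩
  have : x ∈ S.inf id := mem_inf.mpr fun B hB =>
    if hBA : B = A then hBA ▸ hxA else hmem B hB hBA
  simp [hinf] at this

theorem card_sup_le_of_inf_eq_empty [Fintype α] {S : Finset (Finset α)} {k : ℕ}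
    (hcard : ∀ D ∈ S, D.card ≤ k) (hinf : S.inf id = ∅)
    (hne : ∀ A ∈ S, ((S.erase A).inf id).Nonempty) :
    (S.sup id).card ≤ S.card + S.card * (k + 1 - S.card) := by
  rcases S.eq_empty_or_nonempty with rfl | ⟨A₀, hA₀⟩
  · simp
  have : Nonempty α := ⟨(hne A₀ hA₀).choose⟩
  choose! x hxA hxB using fun A hA => exists_notMem_forall_mem_of_inf_eq_empty hinf (hne A hA)
  have hinj : Set.InjOn x S := fun A hA B hB hAB => by
    by_contra hAB'
    exact hxA B hB (hAB ▸ hxB A hA B hB (Ne.symm hAB'))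
  set T := S.image x
  have hTcard : T.card = S.card := card_image_of_injOn hinj
  have hsub : ∀ D ∈ S, T.erase (x D) ⊆ D := by
    intro D hD y hy
    obtain ⟨hyD, hy⟩ := mem_erase.mp hy
    obtain ⟨A, hA, rfl⟩ := mem_image.mp hy
    exact hxB A hA D hD fun h => hyD (h ▸ rfl)
  have hsdiff : ∀ D ∈ S, (D \ T).card ≤ k + 1 - S.card := by
    intro D hD
    have hcardErase : (T.erase (x D)).card = S.card - 1 := by
      rw [card_erase_of_mem (mem_image_of_mem x hD), hTcard]
    calc (D \ T).card ≤ (D \ T.erase (x D)).card :=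
          card_le_card (sdiff_subset_sdiff le_rfl (erase_subset _ _))
      _ = D.card - (T.erase (x D)).card := card_sdiff_of_subset (hsub D hD)
      _ ≤ k + 1 - S.card := by
          have := hcard D hD
          have := card_pos.mpr ⟨A₀, hA₀⟩
          omega
  calc (S.sup id).card ≤ T.card + ∑ D ∈ S, (D \ T).card :=
        card_sup_le_card_add_sum_card_sdiff S T
    _ ≤ S.card + S.card * (k + 1 - S.card) := by
        rw [hTcard]
        exact Nat.add_le_add_left (by simpa using sum_le_card_nsmul S _ _ hsdiff) _

end Finset

theorem stmt_16 (n d : ℕ) (S : Finset (Finset (Fin n)))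
    (hcard : ∀ D ∈ S, D.card = d + 1) (hS : IsSimplex d S) :
    (S.sup id).card ≤ 2 * (d + 1) ∧ IsSimplexCluster (d + 1) d S := by
  obtain ⟨hScard, hinf, hne⟩ := hS
  have hbound : (S.sup id).card ≤ 2 * (d + 1) := by
    have := Finset.card_sup_le_of_inf_eq_empty (fun D hD => (hcard D hD).le) hinf hne
    rwa [hScard, Nat.add_sub_cancel_left, mul_one, ← two_mul] at this
  exact ⟨hbound, ⟨hScard, hinf, hne⟩, hbound⟩
end
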